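/- Let (X, ‖·‖) be a real Banach space and let T : X → X be an enriched Kannan contraction: there exist b ∈ [0,∞) and α ∈ [0, 1/2) such that ‖b(u−v) + Tu − Tv‖ ≤ α(‖u − Tu‖ + ‖v − Tv‖) for all u, v ∈ X with u ≠ v. Then the fixed point problem for T is well-posed: T has a unique fixed point p ∈ X, and for every sequence (u_n) in X with ‖u_n − T u_n‖ → 0 as n → ∞, one has ‖u_n − p‖ → 0 as n → ∞. -/

import Mathlib

/-!
Put `c = 1 / (b + 1)`. The averaged map `S = (1 - c) I + c T` has the same fixed points as `T`,
and since `u - S u = c (u - T u)` and `S u - S v = c (b (u - v) + T u - T v)`, the enriched Kannan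
condition for `T` is the classical Kannan condition `d(S u, S v) ≤ α (d(u, S u) + d(v, S v))`
for `S`. For a Kannan map the triangle inequality gives
`d(u, v) ≤ (1 + α) (d(u, S u) + d(v, S v))`, so a sequence of approximate fixed points is Cauchy,
it converges to a fixed point, and there is only one fixed point. The Picard iterates are
approximate fixed points because `d(S x, S² x) ≤ α / (1 - α) · d(x, S x)` and `α / (1 - α) < 1`.
-/

open Filter Topology Function

section Kannan

variable {M : Type*} [MetricSpace M]

def IsKannanMap (S : M → M) (α : ℝ) : Prop :=
  ∀ x y, dist (S x) (S y) ≤ α * (dist x (S x) + dist y (S y))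

namespace IsKannanMap

variable {S : M → M} {α : ℝ}

theorem dist_le (hS : IsKannanMap S α) (x y : M) :
    dist x y ≤ (1 + α) * (dist x (S x) + dist y (S y)) := by
  have hxy := hS x y
  have := dist_triangle4 x (S x) (S y) y
  rw [dist_comm (S y)] at this
  linarith

theorem eq_of_isFixedPt (hS : IsKannanMap S α) {p q : M} (hp : IsFixedPt S p)
    (hq : IsFixedPt S q) : p = q := by
  have := hS.dist_le p q
  rw [hp.eq, hq.eq, dist_self, dist_self, add_zero, mul_zero] at this
  exact dist_le_zero.1 this

theorem tendsto_of_isFixedPt (hS : IsKannanMap S α) {p : M} (hp : IsFixedPt S p) {u : ℕ → M}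
    (hu : Tendsto (fun n => dist (u n) (S (u n))) atTop (𝓝 0)) : Tendsto u atTop (𝓝 p) := by
  refine tendsto_iff_dist_tendsto_zero.2 (squeeze_zero (fun _ => dist_nonneg) (fun n => ?_)
    (by simpa using hu.const_mul (1 + α)))
  simpa [hp.eq] using hS.dist_le (u n) p

theorem cauchySeq (hS : IsKannanMap S α) {u : ℕ → M}
    (hu : Tendsto (fun n => dist (u n) (S (u n))) atTop (𝓝 0)) : CauchySeq u := by
  rw [cauchySeq_iff_tendsto_dist_atTop_0]
  have hsum : Tendsto (fun n : ℕ × ℕ => (1 + α) * (dist (u n.1) (S (u n.1)) +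
      dist (u n.2) (S (u n.2)))) atTop (𝓝 0) := by
    rw [← prod_atTop_atTop_eq]
    simpa using ((hu.comp tendsto_fst).add (hu.comp tendsto_snd)).const_mul (1 + α)
  exact squeeze_zero (fun _ => dist_nonneg) (fun n => hS.dist_le _ _) hsum

theorem isFixedPt_of_tendsto (hS : IsKannanMap S α) (hα : α < 1) {u : ℕ → M} {p : M}
    (hu : Tendsto (fun n => dist (u n) (S (u n))) atTop (𝓝 0)) (hup : Tendsto u atTop (𝓝 p)) :
    IsFixedPt S p := by
  have hbound : ∀ n, (1 - α) * dist p (S p) ≤ dist p (u n) + (1 + α) * dist (u n) (S (u n)) := by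
    intro n
    have := hS (u n) p
    have := dist_triangle4 p (u n) (S (u n)) (S p)
    linarith
  have hlim : Tendsto (fun n => dist p (u n) + (1 + α) * dist (u n) (S (u n))) atTop (𝓝 0) := by
    simpa using (tendsto_iff_dist_tendsto_zero.1 hup |>.congr fun n => dist_comm _ _).add
      (hu.const_mul (1 + α))
  have := le_of_tendsto_of_tendsto' tendsto_const_nhds hlim hbound
  exact (dist_le_zero.1 (nonpos_of_mul_nonpos_right this (by linarith))).symm

theorem dist_apply_apply_le (hS : IsKannanMap S α) (hα : α < 1) (x : M) :
    dist (S x) (S (S x)) ≤ α / (1 - α) * dist x (S x) := by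
  rw [div_mul_eq_mul_div, le_div_iff₀ (by linarith)]
  linarith [hS x (S x)]

theorem dist_iterate_apply_le (hS : IsKannanMap S α) (hα : α < 1) (hα0 : 0 ≤ α) (x : M)
    (n : ℕ) : dist (S^[n] x) (S (S^[n] x)) ≤ dist x (S x) * (α / (1 - α)) ^ n := by
  induction n with
  | zero => simp
  | succ n ih =>
    rw [iterate_succ_apply']
    calc dist (S (S^[n] x)) (S (S (S^[n] x)))
        ≤ α / (1 - α) * dist (S^[n] x) (S (S^[n] x)) := hS.dist_apply_apply_le hα _
      _ ≤ α / (1 - α) * (dist x (S x) * (α / (1 - α)) ^ n) := by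
        gcongr
      _ = dist x (S x) * (α / (1 - α)) ^ (n + 1) := by ring

theorem tendsto_dist_iterate_apply (hS : IsKannanMap S α) (hα0 : 0 ≤ α) (hα : α < 1 / 2)
    (x : M) : Tendsto (fun n => dist (S^[n] x) (S (S^[n] x))) atTop (𝓝 0) := by
  have hr : α / (1 - α) < 1 := by rw [div_lt_one (by linarith)]; linarith
  have hgeo := (tendsto_pow_atTop_nhds_zero_of_lt_one (div_nonneg hα0 (by linarith)) hr).const_mul
    (dist x (S x))
  rw [mul_zero] at hgeo
  exact squeeze_zero (fun _ => dist_nonneg) (hS.dist_iterate_apply_le (by linarith) hα0 x) hgeo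

theorem exists_isFixedPt [CompleteSpace M] [Nonempty M] (hS : IsKannanMap S α) (hα0 : 0 ≤ α)
    (hα : α < 1 / 2) : ∃ p, IsFixedPt S p := by
  obtain ⟨x⟩ := ‹Nonempty M›
  have hx := hS.tendsto_dist_iterate_apply hα0 hα x
  obtain ⟨p, hp⟩ := cauchySeq_tendsto_of_complete (hS.cauchySeq hx)
  exact ⟨p, hS.isFixedPt_of_tendsto (by linarith) hx hp⟩

end IsKannanMap

end Kannan

section Enriched

variable {X : Type*} [NormedAddCommGroup X] [NormedSpace ℝ X]

def IsEnrichedKannan (T : X → X) (b α : ℝ) : Prop :=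
  ∀ u v, u ≠ v → ‖b • (u - v) + T u - T v‖ ≤ α * (‖u - T u‖ + ‖v - T v‖)

def averagedMap (T : X → X) (c : ℝ) (x : X) : X :=
  (1 - c) • x + c • T x

variable {T : X → X} {b c α : ℝ}

theorem sub_averagedMap (x : X) : x - averagedMap T c x = c • (x - T x) := by
  simp only [averagedMap]
  module

theorem averagedMap_sub_averagedMap (hc : c * (b + 1) = 1) (x y : X) :
    averagedMap T c x - averagedMap T c y = c • (b • (x - y) + T x - T y) := by
  have : 1 - c = c * b := by linarith
  simp only [averagedMap, this]
  module

theorem isFixedPt_averagedMap_iff (hc : c ≠ 0) {x : X} :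
    IsFixedPt (averagedMap T c) x ↔ IsFixedPt T x := by
  rw [IsFixedPt, IsFixedPt, eq_comm, ← sub_eq_zero, sub_averagedMap, smul_eq_zero,
    or_iff_right hc, sub_eq_zero, eq_comm]

theorem IsEnrichedKannan.isKannanMap_averagedMap (hT : IsEnrichedKannan T b α)
    (hc : c * (b + 1) = 1) (hα0 : 0 ≤ α) : IsKannanMap (averagedMap T c) α := by
  intro x y
  rcases eq_or_ne x y with rfl | hxy
  · rw [dist_self]
    positivity
  simp only [dist_eq_norm, sub_averagedMap, averagedMap_sub_averagedMap hc, norm_smul]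
  calc ‖c‖ * ‖b • (x - y) + T x - T y‖ ≤ ‖c‖ * (α * (‖x - T x‖ + ‖y - T y‖)) := by
        gcongr
        exact hT x y hxy
    _ = α * (‖c‖ * ‖x - T x‖ + ‖c‖ * ‖y - T y‖) := by ring

end Enriched

/-- The fixed point problem of an enriched Kannan contraction on a real Banach space
is well-posed. -/
theorem enriched_kannan_contraction_wellPosed
    {X : Type*} [NormedAddCommGroup X] [NormedSpace ℝ X] [CompleteSpace X]
    (T : X → X) (b α : ℝ) (hb : 0 ≤ b) (hα0 : 0 ≤ α) (hα : α < 1 / 2)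
    (hT : ∀ u v : X, u ≠ v →
      ‖b • (u - v) + T u - T v‖ ≤ α * (‖u - T u‖ + ‖v - T v‖)) :
    ∃ p : X, (T p = p ∧ ∀ q : X, T q = q → q = p) ∧
      ∀ u : ℕ → X,
        Filter.Tendsto (fun n => ‖u n - T (u n)‖) Filter.atTop (nhds 0) →
        Filter.Tendsto (fun n => ‖u n - p‖) Filter.atTop (nhds 0) := by
  have hb1 : b + 1 ≠ 0 := by linarith
  have hS : IsKannanMap (averagedMap T (b + 1)⁻¹) α :=
    IsEnrichedKannan.isKannanMap_averagedMap hT (inv_mul_cancel₀ hb1) hα0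
  have hfix : ∀ x, IsFixedPt (averagedMap T (b + 1)⁻¹) x ↔ IsFixedPt T x := fun _ =>
    isFixedPt_averagedMap_iff (inv_ne_zero hb1)
  obtain ⟨p, hp⟩ := hS.exists_isFixedPt hα0 hα
  refine ⟨p, ⟨(hfix p).1 hp, fun q hq => hS.eq_of_isFixedPt ((hfix q).2 hq) hp⟩, fun u hu => ?_⟩
  have hSu : Tendsto (fun n => dist (u n) (averagedMap T (b + 1)⁻¹ (u n))) atTop (𝓝 0) := by
    simpa [dist_eq_norm, sub_averagedMap, norm_smul] using hu.const_mul ‖(b + 1)⁻¹‖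
  exact tendsto_iff_norm_sub_tendsto_zero.1 (hS.tendsto_of_isFixedPt hp hSu)
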